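/- arXiv:2305.04273 — 8 statements merged into one kernel-verified Lean document; each statement's English description precedes it below -/
import Mathlib

section
/- Let G be a group and let u, a, c be elements of G satisfying u·a·u⁻¹ = c⁻¹·a·c and u·c·u⁻¹ = c⁻¹·a⁻¹·c·a·c. Then for every natural number z one has u^z·a·u^(−z) = (c⁻¹·a⁻¹)^z · a · (a·c)^z. -/
/-- First identity of the iterated-conjugation lemma: in any group, if
`u·a·u⁻¹ = c⁻¹·a·c` and `u·c·u⁻¹ = c⁻¹·a⁻¹·c·a·c`, then for every natural
number `z` one has `u^z·a·u^(−z) = (c⁻¹·a⁻¹)^z · a · (a·c)^z`. -/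
theorem stmt_0 {G : Type*} [Group G] (u a c : G)
    (h1 : u * a * u⁻¹ = c⁻¹ * a * c)
    (h2 : u * c * u⁻¹ = c⁻¹ * a⁻¹ * c * a * c) :
    ∀ z : ℕ, u ^ z * a * (u ^ z)⁻¹ = (c⁻¹ * a⁻¹) ^ z * a * (a * c) ^ z := by
  have hua : u * a = c⁻¹ * a * c * u := by
    have := h1; rw [mul_inv_eq_iff_eq_mul] at this; exact this
  have huc : u * c = c⁻¹ * a⁻¹ * c * a * c * u := by
    have := h2; rw [mul_inv_eq_iff_eq_mul] at this; exact this
  have hx : (c⁻¹ * a⁻¹) * u = u * (c⁻¹ * a⁻¹) := by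
    have : u * (c⁻¹ * a⁻¹) * u⁻¹ = c⁻¹ * a⁻¹ := by
      have e : u * (c⁻¹ * a⁻¹) * u⁻¹ = (u * c * u⁻¹)⁻¹ * (u * a * u⁻¹)⁻¹ := by
        group
      rw [e, h1, h2]; group
    rw [mul_inv_eq_iff_eq_mul] at this; rw [this]
  have hy : (a * c) * u = u * (a * c) := by
    have : u * (a * c) * u⁻¹ = a * c := by
      have e : u * (a * c) * u⁻¹ = (u * a * u⁻¹) * (u * c * u⁻¹) := by group
      rw [e, h1, h2]; group
    rw [mul_inv_eq_iff_eq_mul] at this; rw [this]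
  intro z
  induction z with
  | zero => simp
  | succ n ih =>
    have hstep : u * ((c⁻¹ * a⁻¹) ^ n * a * (a * c) ^ n) * u⁻¹ =
        (c⁻¹ * a⁻¹) ^ (n + 1) * a * (a * c) ^ (n + 1) := by
      have hxc : Commute u ((c⁻¹ * a⁻¹) ^ n) :=
        (Commute.pow_right hx.symm n)
      have hyc : Commute u ((a * c) ^ n) :=
        (Commute.pow_right hy.symm n)
      calc u * ((c⁻¹ * a⁻¹) ^ n * a * (a * c) ^ n) * u⁻¹
          = (u * (c⁻¹ * a⁻¹) ^ n) * (a * ((a * c) ^ n * u⁻¹)) := by group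
        _ = ((c⁻¹ * a⁻¹) ^ n * u) * (a * (u⁻¹ * (a * c) ^ n)) := by
            rw [hxc.eq, (hyc.inv_left.eq).symm]
        _ = (c⁻¹ * a⁻¹) ^ n * (u * a * u⁻¹) * (a * c) ^ n := by group
        _ = (c⁻¹ * a⁻¹) ^ n * (c⁻¹ * a * c) * (a * c) ^ n := by rw [h1]
        _ = (c⁻¹ * a⁻¹) ^ (n + 1) * a * (a * c) ^ (n + 1) := by
            rw [pow_succ, pow_succ']
            simp only [mul_assoc, inv_mul_cancel_left, mul_inv_cancel_left]
    calc u ^ (n + 1) * a * (u ^ (n + 1))⁻¹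
        = u * (u ^ n * a * (u ^ n)⁻¹) * u⁻¹ := by
          rw [pow_succ']; group
      _ = u * ((c⁻¹ * a⁻¹) ^ n * a * (a * c) ^ n) * u⁻¹ := by rw [ih]
      _ = (c⁻¹ * a⁻¹) ^ (n + 1) * a * (a * c) ^ (n + 1) := hstep
end

section
/- Let G be a group and let u, a, c be elements of G satisfying u·a·u⁻¹ = c⁻¹·a·c and u·c·u⁻¹ = c⁻¹·a⁻¹·c·a·c. Then for every natural number z one has u^z·c·u^(−z) = (c⁻¹·a⁻¹)^z · c · (a·c)^z. -/
lemma conj_pow_fix {G : Type*} [Group G] (u x : G) (hx : u * x * u⁻¹ = x) :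
    ∀ n : ℕ, u ^ n * x * (u ^ n)⁻¹ = x := by
  intro n
  induction n with
  | zero => simp
  | succ m ihm =>
    have : u ^ (m + 1) * x * (u ^ (m + 1))⁻¹ =
        u ^ m * (u * x * u⁻¹) * (u ^ m)⁻¹ := by group
    rw [this, hx, ihm]

/-- Second identity of the iterated-conjugation lemma: in any group, if
`u·a·u⁻¹ = c⁻¹·a·c` and `u·c·u⁻¹ = c⁻¹·a⁻¹·c·a·c`, then for every natural
number `z` one has `u^z·c·u^(−z) = (c⁻¹·a⁻¹)^z · c · (a·c)^z`. -/
theorem stmt_1 {G : Type*} [Group G] (u a c : G)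
    (h1 : u * a * u⁻¹ = c⁻¹ * a * c)
    (h2 : u * c * u⁻¹ = c⁻¹ * a⁻¹ * c * a * c) :
    ∀ z : ℕ, u ^ z * c * (u ^ z)⁻¹ = (c⁻¹ * a⁻¹) ^ z * c * (a * c) ^ z := by
  have hac : u * (a * c) * u⁻¹ = a * c := by
    have : u * (a * c) * u⁻¹ = (u * a * u⁻¹) * (u * c * u⁻¹) := by group
    rw [this, h1, h2]; group
  have hca : u * (c⁻¹ * a⁻¹) * u⁻¹ = c⁻¹ * a⁻¹ := by
    have : u * (c⁻¹ * a⁻¹) * u⁻¹ = (u * (a * c) * u⁻¹)⁻¹ := by group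
    rw [this, hac]; group
  intro z
  induction z with
  | zero => simp
  | succ n ih =>
    have step : u ^ (n + 1) * c * (u ^ (n + 1))⁻¹ =
        u ^ n * (u * c * u⁻¹) * (u ^ n)⁻¹ := by group
    rw [step, h2]
    have e : u ^ n * (c⁻¹ * a⁻¹ * c * a * c) * (u ^ n)⁻¹ =
        (u ^ n * (c⁻¹ * a⁻¹) * (u ^ n)⁻¹) * (u ^ n * c * (u ^ n)⁻¹) *
        (u ^ n * (a * c) * (u ^ n)⁻¹) := by group
    rw [e, conj_pow_fix u _ hca, conj_pow_fix u _ hac, ih]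
    rw [pow_succ', pow_succ]
    group
end

section
/- Let G be a group and let u, a, c, x be elements of G satisfying u·a·u⁻¹ = c⁻¹·a·c, u·c·u⁻¹ = c⁻¹·a⁻¹·c·a·c, and u·x·u⁻¹ = c⁻¹·a⁻¹·c·a·x·a⁻¹·c⁻¹·a·c. Then for every natural number z one has u^z·x·u^(−z) = (c⁻¹·a⁻¹)^z·(c·a)^z · x · (a⁻¹·c⁻¹)^z·(a·c)^z. -/
private lemma aux_conj {G : Type*} [Group G] (u D C x : G)
    (hD : u * D * u⁻¹ = D)
    (hC : u * C * u⁻¹ = D * C * D⁻¹)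
    (hx : u * x * u⁻¹ = D * C * x * C⁻¹ * D⁻¹) :
    ∀ z : ℕ, u ^ z * x * (u ^ z)⁻¹ = D ^ z * C ^ z * x * (C⁻¹) ^ z * (D⁻¹) ^ z := by
  intro z
  induction z with
  | zero => group
  | succ n ih =>
    have step : u ^ (n + 1) * x * (u ^ (n + 1))⁻¹
        = u * (u ^ n * x * (u ^ n)⁻¹) * u⁻¹ := by
      rw [pow_succ']; group
    rw [step, ih]
    have expand : u * (D ^ n * C ^ n * x * (C⁻¹) ^ n * (D⁻¹) ^ n) * u⁻¹
        = (u * D ^ n * u⁻¹) * (u * C ^ n * u⁻¹) * (u * x * u⁻¹)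
          * (u * (C⁻¹) ^ n * u⁻¹) * (u * (D⁻¹) ^ n * u⁻¹) := by group
    have pD : u * D ^ n * u⁻¹ = D ^ n := by rw [← conj_pow, hD]
    have pDi : u * (D⁻¹) ^ n * u⁻¹ = (D⁻¹) ^ n := by
      rw [← conj_pow]
      have : u * D⁻¹ * u⁻¹ = (u * D * u⁻¹)⁻¹ := by group
      rw [this, hD]
    have pC : u * C ^ n * u⁻¹ = D * C ^ n * D⁻¹ := by rw [← conj_pow, hC, conj_pow]
    have pCi : u * (C⁻¹) ^ n * u⁻¹ = D * (C⁻¹) ^ n * D⁻¹ := by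
      rw [← conj_pow]
      have : u * C⁻¹ * u⁻¹ = (u * C * u⁻¹)⁻¹ := by group
      rw [this, hC]
      have : (D * C * D⁻¹)⁻¹ = D * C⁻¹ * D⁻¹ := by group
      rw [this, conj_pow]
    rw [expand, pD, pDi, pC, pCi, hx]
    group

/-- Third/fourth/fifth identities of the iterated-conjugation lemma: in any group,
if `u·a·u⁻¹ = c⁻¹·a·c`, `u·c·u⁻¹ = c⁻¹·a⁻¹·c·a·c` and
`u·x·u⁻¹ = c⁻¹·a⁻¹·c·a·x·a⁻¹·c⁻¹·a·c`, then for every natural number `z` one has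
`u^z·x·u^(−z) = (c⁻¹·a⁻¹)^z·(c·a)^z · x · (a⁻¹·c⁻¹)^z·(a·c)^z`. -/
theorem stmt_2 {G : Type*} [Group G] (u a c x : G)
    (h1 : u * a * u⁻¹ = c⁻¹ * a * c)
    (h2 : u * c * u⁻¹ = c⁻¹ * a⁻¹ * c * a * c)
    (h3 : u * x * u⁻¹ = c⁻¹ * a⁻¹ * c * a * x * a⁻¹ * c⁻¹ * a * c) :
    ∀ z : ℕ, u ^ z * x * (u ^ z)⁻¹ =
      (c⁻¹ * a⁻¹) ^ z * (c * a) ^ z * x * (a⁻¹ * c⁻¹) ^ z * (a * c) ^ z := by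
  have hD : u * (c⁻¹ * a⁻¹) * u⁻¹ = c⁻¹ * a⁻¹ := by
    have : u * (c⁻¹ * a⁻¹) * u⁻¹ = (u * c * u⁻¹)⁻¹ * (u * a * u⁻¹)⁻¹ := by group
    rw [this, h1, h2]; group
  have hC : u * (c * a) * u⁻¹ = (c⁻¹ * a⁻¹) * (c * a) * (c⁻¹ * a⁻¹)⁻¹ := by
    have : u * (c * a) * u⁻¹ = (u * c * u⁻¹) * (u * a * u⁻¹) := by group
    rw [this, h1, h2]; group
  have hx : u * x * u⁻¹ = (c⁻¹ * a⁻¹) * (c * a) * x * (c * a)⁻¹ * (c⁻¹ * a⁻¹)⁻¹ := by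
    rw [h3]; group
  intro z
  have := aux_conj u (c⁻¹ * a⁻¹) (c * a) x hD hC hx z
  rw [this]
  have e1 : ((c * a)⁻¹ : G) = a⁻¹ * c⁻¹ := by group
  have e2 : ((c⁻¹ * a⁻¹)⁻¹ : G) = a * c := by group
  rw [e1, e2]
end

section
/- Let G be a group, m a natural number, and let u, a, c be elements of G satisfying u·a·u⁻¹ = c⁻¹·a·c, u·c·u⁻¹ = c⁻¹·a⁻¹·c·a·c, and u^m = 1. Then (c·a)^m = (a·c)^m. -/
/-- In any group, if `u·a·u⁻¹ = c⁻¹·a·c`, `u·c·u⁻¹ = c⁻¹·a⁻¹·c·a·c` and `u^m = 1`,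
then `(c·a)^m = (a·c)^m`. -/
theorem stmt_3 {G : Type*} [Group G] (m : ℕ) (u a c : G)
    (h1 : u * a * u⁻¹ = c⁻¹ * a * c)
    (h2 : u * c * u⁻¹ = c⁻¹ * a⁻¹ * c * a * c)
    (h3 : u ^ m = 1) :
    (c * a) ^ m = (a * c) ^ m := by
  -- a*c is fixed by conjugation by u
  have hac : u * (a * c) * u⁻¹ = a * c := by
    have h : u * (a * c) * u⁻¹ = (u * a * u⁻¹) * (u * c * u⁻¹) := by group
    rw [h, h1, h2]; group
  -- hence fixed by conjugation by any power of u
  have hfix : ∀ n : ℕ, u ^ n * (a * c) * (u ^ n)⁻¹ = a * c := by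
    intro n
    induction n with
    | zero => simp
    | succ k ihk =>
      have h5 : u ^ (k + 1) * (a * c) * (u ^ (k + 1))⁻¹
          = u ^ k * (u * (a * c) * u⁻¹) * (u ^ k)⁻¹ := by rw [pow_succ]; group
      rw [h5, hac, ihk]
  -- iterated conjugation identity
  have key : ∀ n : ℕ, u ^ n * a * (u ^ n)⁻¹ = ((a * c) ^ n)⁻¹ * a * (a * c) ^ n := by
    intro n
    induction n with
    | zero => simp
    | succ k ih =>
      have h5 : u ^ (k + 1) * a * (u ^ (k + 1))⁻¹
          = u ^ k * (u * a * u⁻¹) * (u ^ k)⁻¹ := by rw [pow_succ]; group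
      have h6 : u ^ k * (c⁻¹ * a * c) * (u ^ k)⁻¹
          = (u ^ k * (a * c) * (u ^ k)⁻¹)⁻¹ * (u ^ k * a * (u ^ k)⁻¹)
            * (u ^ k * (a * c) * (u ^ k)⁻¹) := by group
      rw [h5, h1, h6, hfix k, ih, pow_succ]
      group
  -- with u^m = 1: a commutes with (a*c)^m
  have hcomm : a * (a * c) ^ m = (a * c) ^ m * a := by
    have := key m
    rw [h3] at this
    simp at this
    calc a * (a * c) ^ m = (a * c) ^ m * (((a * c) ^ m)⁻¹ * a * (a * c) ^ m) := by group
    _ = (a * c) ^ m * a := by rw [← this]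
  -- conclude
  have hca : (c * a) ^ m = a⁻¹ * (a * c) ^ m * a := by
    have h7 : c * a = a⁻¹ * (a * c) * a⁻¹⁻¹ := by group
    rw [h7, conj_pow]; group
  rw [hca]
  calc a⁻¹ * (a * c) ^ m * a = a⁻¹ * (a * (a * c) ^ m * a⁻¹) * a := by rw [hcomm]; group
  _ = (a * c) ^ m := by group
end

section
/- Let n ≥ 2, L ≥ 0, N ≥ 1, and let m₁, …, m_N ≥ 2. Let Γ = ℤ/m₁ ∗ ⋯ ∗ ℤ/m_N be the free product of cyclic groups with distinguished generators z₁, …, z_N, and let F be the free group on the n−1+L generators x₁, …, x_{n−1}, y₁, …, y_L. Then for every 1 ≤ k ≤ n−1 and every 1 ≤ ν ≤ N, the element (x_k·z_ν)^{m_ν}·(x_k⁻¹·z_ν⁻¹)^{m_ν} of the free product F ∗ Γ is not the identity. In particular, the normal closure of the set {(x_k·z_ν)^{m_ν}·(x_k⁻¹·z_ν⁻¹)^{m_ν} : 1 ≤ k ≤ n−1, 1 ≤ ν ≤ N} in F ∗ Γ is a nontrivial normal subgroup. -/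
/-- The free product `F_{n-1+L} ∗ Γ`, where `F_{n-1+L}` is the free group on the
generators `x₁, …, x_{n-1}, y₁, …, y_L` and `Γ = ℤ/m₁ ∗ ⋯ ∗ ℤ/m_N`. -/
abbrev OrbifoldFundGroup (n L N : ℕ) (m : Fin N → ℕ) : Type :=
  Monoid.Coprod (FreeGroup (Fin (n - 1) ⊕ Fin L))
    (Monoid.CoprodI fun ν : Fin N => Multiplicative (ZMod (m ν)))

/-- The generator `x_k` of the free factor, `1 ≤ k ≤ n-1`. -/
def xGen (n L N : ℕ) (m : Fin N → ℕ) (k : Fin (n - 1)) : OrbifoldFundGroup n L N m :=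
  Monoid.Coprod.inl (FreeGroup.of (Sum.inl k))

/-- The generator `y_λ` of the free factor, `1 ≤ λ ≤ L`. -/
def yGen (n L N : ℕ) (m : Fin N → ℕ) (l : Fin L) : OrbifoldFundGroup n L N m :=
  Monoid.Coprod.inl (FreeGroup.of (Sum.inr l))

/-- The distinguished generator `z_ν` of the `ν`-th cyclic factor `ℤ/m_ν` of `Γ`. -/
def zGen (n L N : ℕ) (m : Fin N → ℕ) (ν : Fin N) : OrbifoldFundGroup n L N m :=
  Monoid.Coprod.inr (Monoid.CoprodI.of (Multiplicative.ofAdd (1 : ZMod (m ν))))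

/-! Send `x_k` and `z_ν` to permutations `a` and `b` of `Fin (m_ν + 1)` where `b` is an
`m_ν`-cycle and `a * b` is the full `(m_ν + 1)`-cycle `c`. Since `a⁻¹ b⁻¹ = (b a)⁻¹` and
`b a = b (a b) b⁻¹`, the element maps to `1` exactly when `b` commutes with `c ^ m_ν = c⁻¹`,
i.e. with `c`, which it does not: `b` fixes the last point and `c` moves it to `0`. -/

theorem mul_pow_mul_inv_mul_inv_pow_eq_one_iff_commute {G : Type*} [Group G] (a z : G) (M : ℕ) :
    (a * z) ^ M * (a⁻¹ * z⁻¹) ^ M = 1 ↔ Commute z ((a * z) ^ M) := by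
  have hconj : (z * a) ^ M = z * (a * z) ^ M * z⁻¹ := by
    rw [← conj_pow]
    group
  rw [← mul_inv_rev, inv_pow, mul_inv_eq_one, hconj, eq_mul_inv_iff_mul_eq, eq_comm,
    commute_iff_eq]

theorem mul_pow_mul_inv_mul_inv_pow_ne_one {G : Type*} [Group G] {a z : G} {M : ℕ}
    (h : (a * z) ^ (M + 1) = 1) (hz : ¬Commute z (a * z)) :
    (a * z) ^ M * (a⁻¹ * z⁻¹) ^ M ≠ 1 := by
  have hpow : (a * z) ^ M = (a * z)⁻¹ := eq_inv_of_mul_eq_one_left (by rwa [← pow_succ])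
  rwa [ne_eq, mul_pow_mul_inv_mul_inv_pow_eq_one_iff_commute, hpow, Commute.inv_right_iff]

theorem Fin.orderOf_cycleRange {n : ℕ} [NeZero n] (i : Fin n) :
    orderOf i.cycleRange = i + 1 := by
  rcases eq_or_ne i 0 with rfl | h
  · simp
  · rw [← Equiv.Perm.lcm_cycleType, Fin.cycleType_cycleRange h]
    simp

theorem Fin.not_commute_cycleRange_cycleRange_last {n : ℕ} {i : Fin (n + 1)} (h0 : i ≠ 0)
    (hlast : i ≠ Fin.last n) : ¬Commute i.cycleRange (Fin.cycleRange (Fin.last n)) := by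
  intro h
  have hn : n ≠ 0 := by
    rintro rfl
    exact h0 (Fin.fin_one_eq_zero i)
  have := DFunLike.congr_fun h.eq (Fin.last n)
  simp only [Equiv.Perm.mul_apply, Fin.cycleRange_self,
    Fin.cycleRange_of_gt (Fin.lt_last_iff_ne_last.2 hlast),
    Fin.cycleRange_of_lt (Fin.pos_iff_ne_zero.2 h0)] at this
  simp [hn] at this

theorem exists_perm_pow_eq_one_and_mul_pow_mul_inv_mul_inv_pow_ne_one {M : ℕ} (hM : 2 ≤ M) :
    ∃ a b : Equiv.Perm (Fin (M + 1)), b ^ M = 1 ∧ (a * b) ^ M * (a⁻¹ * b⁻¹) ^ M ≠ 1 := by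
  let b : Equiv.Perm (Fin (M + 1)) := Fin.cycleRange ⟨M - 1, by omega⟩
  let c : Equiv.Perm (Fin (M + 1)) := Fin.cycleRange (Fin.last M)
  have hb : b ^ M = 1 := by
    simpa [b, Fin.orderOf_cycleRange, Nat.sub_add_cancel (by omega : 1 ≤ M)] using
      pow_orderOf_eq_one b
  have hc : c ^ (M + 1) = 1 := by
    have := pow_orderOf_eq_one c
    rwa [Fin.orderOf_cycleRange, Fin.val_last] at this
  have hbc : ¬Commute b c :=
    Fin.not_commute_cycleRange_cycleRange_last (by simp [Fin.ext_iff]; omega)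
      (by simp [Fin.ext_iff]; omega)
  refine ⟨c * b⁻¹, b, hb, ?_⟩
  refine mul_pow_mul_inv_mul_inv_pow_ne_one ?_ ?_ <;> rwa [inv_mul_cancel_right]

noncomputable def zmodPowersHom {G : Type*} [Group G] {M : ℕ} (g : G) (hg : g ^ M = 1) :
    Multiplicative (ZMod M) →* G :=
  AddMonoidHom.toMultiplicativeLeft <|
    ZMod.lift M ⟨zmultiplesHom (Additive G) (Additive.ofMul g), by simp [← ofMul_pow, hg]⟩

theorem zmodPowersHom_ofAdd_one {G : Type*} [Group G] {M : ℕ} (g : G) (hg : g ^ M = 1) :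
    zmodPowersHom g hg (Multiplicative.ofAdd 1) = g := by
  rw [zmodPowersHom, AddMonoidHom.coe_toMultiplicativeLeft, Function.comp_apply,
    Function.comp_apply, toAdd_ofAdd, ← Int.cast_one, ZMod.lift_coe]
  simp

theorem exists_monoidHom_xGen_zGen {n L N : ℕ} {m : Fin N → ℕ} {G : Type*} [Group G]
    (k : Fin (n - 1)) (ν : Fin N) (a b : G) (hb : b ^ m ν = 1) :
    ∃ φ : OrbifoldFundGroup n L N m →* G, φ (xGen n L N m k) = a ∧ φ (zGen n L N m ν) = b := by
  refine ⟨Monoid.Coprod.lift (FreeGroup.lift (Pi.mulSingle (Sum.inl k) a))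
    (Monoid.CoprodI.lift (Pi.mulSingle (M := fun ν => Multiplicative (ZMod (m ν)) →* G) ν
      (zmodPowersHom b hb))), ?_, ?_⟩
  · simp [xGen]
  · simp [zGen, zmodPowersHom_ofAdd_one]

/-- For `n ≥ 2`, `N ≥ 1` and `m_ν ≥ 2`, each element
`(x_k·z_ν)^{m_ν}·(x_k⁻¹·z_ν⁻¹)^{m_ν}` of `F_{n-1+L} ∗ Γ` is not the identity;
in particular the normal closure of the set of all these elements is a
nontrivial normal subgroup. -/
theorem stmt_5 (n L N : ℕ) (hn : 2 ≤ n) (hN : 1 ≤ N)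
    (m : Fin N → ℕ) (hm : ∀ ν, 2 ≤ m ν) :
    (∀ (k : Fin (n - 1)) (ν : Fin N),
      (xGen n L N m k * zGen n L N m ν) ^ m ν *
        ((xGen n L N m k)⁻¹ * (zGen n L N m ν)⁻¹) ^ m ν ≠ 1) ∧
    Subgroup.normalClosure
        {g : OrbifoldFundGroup n L N m | ∃ (k : Fin (n - 1)) (ν : Fin N),
          g = (xGen n L N m k * zGen n L N m ν) ^ m ν *
            ((xGen n L N m k)⁻¹ * (zGen n L N m ν)⁻¹) ^ m ν} ≠ ⊥ := by
  have hne_one : ∀ (k : Fin (n - 1)) (ν : Fin N),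
      (xGen n L N m k * zGen n L N m ν) ^ m ν *
        ((xGen n L N m k)⁻¹ * (zGen n L N m ν)⁻¹) ^ m ν ≠ 1 := by
    intro k ν h
    obtain ⟨a, b, hb, hab⟩ := exists_perm_pow_eq_one_and_mul_pow_mul_inv_mul_inv_pow_ne_one (hm ν)
    obtain ⟨φ, hx, hz⟩ := exists_monoidHom_xGen_zGen (L := L) k ν a b hb
    apply hab
    simpa [map_inv φ, hx, hz] using congrArg φ h
  refine ⟨hne_one, fun hbot => hne_one ⟨0, by omega⟩ ⟨0, hN⟩ ?_⟩
  rw [← Subgroup.mem_bot, ← hbot]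
  exact Subgroup.subset_normalClosure ⟨_, _, rfl⟩
end

section
/- Let n ≥ 2, L ≥ 1, N ≥ 1, m₁, …, m_N ≥ 2, Γ = ℤ/m₁ ∗ ⋯ ∗ ℤ/m_N with distinguished generators z₁, …, z_N, and F the free group on x₁, …, x_{n−1}, y₁, …, y_L. Fix 1 ≤ θ ≤ L and 1 ≤ o ≤ N. Then there is a unique group homomorphism q from F ∗ Γ to the free product ℤ ∗ ℤ/m_o (with t a generator of the ℤ factor and s a generator of the ℤ/m_o factor) such that q(y_θ) = t, q(z_o) = s, and q sends every other generator (each x_k, each y_λ with λ ≠ θ, and each z_ν with ν ≠ o) to the identity. Moreover, for all 1 ≤ k ≤ n−1 and 1 ≤ ν ≤ N the element (x_k·z_ν)^{m_ν}·(x_k⁻¹·z_ν⁻¹)^{m_ν} lies in the kernel of q, while (y_θ·z_o)^{m_o}·(y_θ⁻¹·z_o⁻¹)^{m_o} does not lie in the kernel of q. -/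
/-- The generator `t` of the `ℤ` factor of `ℤ ∗ ℤ/m_o`. -/
def tGen (mo : ℕ) : Monoid.Coprod (Multiplicative ℤ) (Multiplicative (ZMod mo)) :=
  Monoid.Coprod.inl (Multiplicative.ofAdd (1 : ℤ))

/-- The generator `s` of the `ℤ/m_o` factor of `ℤ ∗ ℤ/m_o`. -/
def sGen (mo : ℕ) : Monoid.Coprod (Multiplicative ℤ) (Multiplicative (ZMod mo)) :=
  Monoid.Coprod.inr (Multiplicative.ofAdd (1 : ZMod mo))

/-!
The homomorphism is built factor by factor from the universal properties of the free group,
the free product and the cyclic groups, and it is unique because the `x_k`, `y_λ`, `z_ν`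
generate. Since `q` kills `x_k`, the image of `(x_k z_ν)^{m_ν} (x_k⁻¹ z_ν⁻¹)^{m_ν}` is
`q(z_ν)^{m_ν} q(z_ν)⁻¹^{m_ν} = 1`. The image of `(y_θ z_o)^{m_o} (y_θ⁻¹ z_o⁻¹)^{m_o}` is
`(ts)^{m_o} (t⁻¹s⁻¹)^{m_o}`, a reduced alternating word of `4 m_o` letters (`s ≠ 1` as
`m_o ≥ 2`), hence nontrivial by the normal form theorem for free products.
-/

open Monoid Multiplicative

theorem MonoidHom.ext_mzmod {k : ℕ} {G : Type*} [Group G]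
    {f g : Multiplicative (ZMod k) →* G} (h : f (ofAdd 1) = g (ofAdd 1)) : f = g := by
  refine MonoidHom.ext fun a => ?_
  obtain ⟨z, hz⟩ := ZMod.intCast_surjective (toAdd a)
  have ha : a = ofAdd (1 : ZMod k) ^ z := by rw [← ofAdd_zsmul, zsmul_one, hz, ofAdd_toAdd]
  rw [ha, map_zpow, map_zpow, h]

namespace Monoid.CoprodI

variable {ι : Type*} {M : ι → Type*} [∀ i, Monoid (M i)]

theorem NeWord.prod_ne_one [DecidableEq ι] [∀ i, DecidableEq (M i)] {i j : ι}
    (w : NeWord M i j) : w.prod ≠ 1 := fun h =>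
  w.toList_ne_nil <| congrArg Word.toList
    (Word.equiv.symm.injective (h.trans Word.prod_empty.symm) : w.toWord = Word.empty)

def NeWord.alternating {i j : ι} (hij : i ≠ j) (a : M i) (b : M j) (ha : a ≠ 1) (hb : b ≠ 1) :
    ℕ → NeWord M i j
  | 0 => .append (.singleton a ha) hij (.singleton b hb)
  | k + 1 => .append (alternating hij a b ha hb 0) hij.symm (alternating hij a b ha hb k)

theorem NeWord.alternating_prod {i j : ι} (hij : i ≠ j) {a : M i} {b : M j} (ha : a ≠ 1)
    (hb : b ≠ 1) (k : ℕ) : (alternating hij a b ha hb k).prod = (of a * of b) ^ (k + 1) := by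
  induction k with
  | zero => simp [alternating]
  | succ k ih => rw [alternating, append_prod, ih, alternating, append_prod, prod_singleton,
      prod_singleton, ← pow_succ']

theorem of_mul_of_pow_mul_of_mul_of_pow_ne_one {i j : ι} (hij : i ≠ j) {a a' : M i}
    {b b' : M j} (ha : a ≠ 1) (hb : b ≠ 1) (ha' : a' ≠ 1) (hb' : b' ≠ 1) {k l : ℕ}
    (hk : k ≠ 0) (hl : l ≠ 0) : (of a * of b) ^ k * (of a' * of b') ^ l ≠ 1 := by
  classical
  obtain ⟨k, rfl⟩ := Nat.exists_eq_succ_of_ne_zero hk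
  obtain ⟨l, rfl⟩ := Nat.exists_eq_succ_of_ne_zero hl
  rw [← NeWord.alternating_prod hij ha hb, ← NeWord.alternating_prod hij ha' hb',
    ← NeWord.append_prod (hne := hij.symm)]
  exact NeWord.prod_ne_one _

end Monoid.CoprodI

theorem tGen_mul_sGen_pow_mul_inv_pow_ne_one {c : ℕ} (hc : 2 ≤ c) :
    (tGen c * sGen c) ^ c * ((tGen c)⁻¹ * (sGen c)⁻¹) ^ c ≠ 1 := by
  have : Fact (1 < c) := ⟨hc⟩
  -- Reducing `t` mod `c` keeps the word reduced and puts both factors in one type.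
  let φ : Coprod (Multiplicative ℤ) (Multiplicative (ZMod c)) →*
      CoprodI fun _ : Bool => Multiplicative (ZMod c) :=
    Coprod.lift ((CoprodI.of (i := false)).comp (Int.castAddHom (ZMod c)).toMultiplicative)
      (CoprodI.of (M := fun _ : Bool => Multiplicative (ZMod c)) (i := true))
  have hgen : (ofAdd 1 : Multiplicative (ZMod c)) ≠ 1 := ofAdd_eq_one.not.2 one_ne_zero
  intro h
  refine CoprodI.of_mul_of_pow_mul_of_mul_of_pow_ne_one
    (M := fun _ : Bool => Multiplicative (ZMod c)) Bool.false_ne_true hgen hgen (inv_ne_one.2 hgen) (inv_ne_one.2 hgen) (k := c) (l := c)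
    (by omega) (by omega) ?_
  simpa [φ, tGen, sGen] using congrArg φ h

namespace OrbifoldFundGroup

variable {n L N : ℕ} {m : Fin N → ℕ}

theorem hom_ext {G : Type*} [Group G] {f g : OrbifoldFundGroup n L N m →* G}
    (hx : ∀ k, f (xGen n L N m k) = g (xGen n L N m k))
    (hy : ∀ l, f (yGen n L N m l) = g (yGen n L N m l))
    (hz : ∀ ν, f (zGen n L N m ν) = g (zGen n L N m ν)) : f = g :=
  Coprod.hom_ext (FreeGroup.ext_hom _ _ (Sum.forall.2 ⟨hx, hy⟩))
    (CoprodI.ext_hom _ _ fun ν => MonoidHom.ext_mzmod (hz ν))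

variable (n L N m) in
def qHom (θ : Fin L) (o : Fin N) :
    OrbifoldFundGroup n L N m →* Coprod (Multiplicative ℤ) (Multiplicative (ZMod (m o))) :=
  Coprod.lift (FreeGroup.lift (Sum.elim 1 (Pi.mulSingle θ (tGen (m o)))))
    (CoprodI.lift (Pi.mulSingle o Coprod.inr))

variable (θ : Fin L) (o : Fin N)

theorem qHom_xGen (k : Fin (n - 1)) : qHom n L N m θ o (xGen n L N m k) = 1 := by
  simp [qHom, xGen]

theorem qHom_yGen_self : qHom n L N m θ o (yGen n L N m θ) = tGen (m o) := by
  simp [qHom, yGen]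

theorem qHom_yGen_of_ne {l : Fin L} (hl : l ≠ θ) : qHom n L N m θ o (yGen n L N m l) = 1 := by
  simp [qHom, yGen, hl]

theorem qHom_zGen_self : qHom n L N m θ o (zGen n L N m o) = sGen (m o) := by
  simp [qHom, zGen, sGen]

theorem qHom_zGen_of_ne {ν : Fin N} (hν : ν ≠ o) : qHom n L N m θ o (zGen n L N m ν) = 1 := by
  simp [qHom, zGen, hν]

theorem eq_qHom {q : OrbifoldFundGroup n L N m →*
      Coprod (Multiplicative ℤ) (Multiplicative (ZMod (m o)))}
    (hy : q (yGen n L N m θ) = tGen (m o)) (hz : q (zGen n L N m o) = sGen (m o))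
    (hx : ∀ k, q (xGen n L N m k) = 1) (hy' : ∀ l, l ≠ θ → q (yGen n L N m l) = 1)
    (hz' : ∀ ν, ν ≠ o → q (zGen n L N m ν) = 1) : q = qHom n L N m θ o := by
  refine hom_ext (fun k => by rw [hx, qHom_xGen]) (fun l => ?_) (fun ν => ?_)
  · obtain rfl | hl := eq_or_ne l θ
    · rw [hy, qHom_yGen_self]
    · rw [hy' l hl, qHom_yGen_of_ne θ o hl]
  · obtain rfl | hν := eq_or_ne ν o
    · rw [hz, qHom_zGen_self]
    · rw [hz' ν hν, qHom_zGen_of_ne θ o hν]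

end OrbifoldFundGroup

theorem stmt_6_general (n L N : ℕ)
    (m : Fin N → ℕ) (hm : ∀ ν, 2 ≤ m ν) (θ : Fin L) (o : Fin N) :
    (∃! q : OrbifoldFundGroup n L N m →*
        Monoid.Coprod (Multiplicative ℤ) (Multiplicative (ZMod (m o))),
      q (yGen n L N m θ) = tGen (m o) ∧
      q (zGen n L N m o) = sGen (m o) ∧
      (∀ k : Fin (n - 1), q (xGen n L N m k) = 1) ∧
      (∀ l : Fin L, l ≠ θ → q (yGen n L N m l) = 1) ∧
      (∀ ν : Fin N, ν ≠ o → q (zGen n L N m ν) = 1)) ∧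
    (∀ q : OrbifoldFundGroup n L N m →*
        Monoid.Coprod (Multiplicative ℤ) (Multiplicative (ZMod (m o))),
      (q (yGen n L N m θ) = tGen (m o) ∧
       q (zGen n L N m o) = sGen (m o) ∧
       (∀ k : Fin (n - 1), q (xGen n L N m k) = 1) ∧
       (∀ l : Fin L, l ≠ θ → q (yGen n L N m l) = 1) ∧
       (∀ ν : Fin N, ν ≠ o → q (zGen n L N m ν) = 1)) →
      ((∀ (k : Fin (n - 1)) (ν : Fin N),
          q ((xGen n L N m k * zGen n L N m ν) ^ m ν *
            ((xGen n L N m k)⁻¹ * (zGen n L N m ν)⁻¹) ^ m ν) = 1) ∧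
        q ((yGen n L N m θ * zGen n L N m o) ^ m o *
          ((yGen n L N m θ)⁻¹ * (zGen n L N m o)⁻¹) ^ m o) ≠ 1)) := by
  open OrbifoldFundGroup in
  refine ⟨⟨qHom n L N m θ o, ⟨qHom_yGen_self θ o, qHom_zGen_self θ o, qHom_xGen θ o,
    fun _ => qHom_yGen_of_ne θ o, fun _ => qHom_zGen_of_ne θ o⟩,
    fun q ⟨hy, hz, hx, hy', hz'⟩ => eq_qHom θ o hy hz hx hy' hz'⟩, ?_⟩
  rintro q ⟨hy, hz, hx, -, -⟩
  refine ⟨fun k ν => ?_, ?_⟩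
  · simp only [map_mul, map_pow, map_inv q, hx, inv_one, one_mul, inv_pow, mul_inv_cancel]
  · simpa only [map_mul, map_pow, map_inv q, hy, hz] using
      tGen_mul_sGen_pow_mul_inv_pow_ne_one (hm o)

/-- There is a unique homomorphism `q : F ∗ Γ → ℤ ∗ ℤ/m_o` with `q(y_θ) = t`,
`q(z_o) = s` and killing all other generators; moreover each
`(x_k·z_ν)^{m_ν}·(x_k⁻¹·z_ν⁻¹)^{m_ν}` lies in the kernel of `q`, while
`(y_θ·z_o)^{m_o}·(y_θ⁻¹·z_o⁻¹)^{m_o}` does not. -/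
theorem stmt_6 (n L N : ℕ) (hn : 2 ≤ n) (hL : 1 ≤ L) (hN : 1 ≤ N)
    (m : Fin N → ℕ) (hm : ∀ ν, 2 ≤ m ν) (θ : Fin L) (o : Fin N) :
    (∃! q : OrbifoldFundGroup n L N m →*
        Monoid.Coprod (Multiplicative ℤ) (Multiplicative (ZMod (m o))),
      q (yGen n L N m θ) = tGen (m o) ∧
      q (zGen n L N m o) = sGen (m o) ∧
      (∀ k : Fin (n - 1), q (xGen n L N m k) = 1) ∧
      (∀ l : Fin L, l ≠ θ → q (yGen n L N m l) = 1) ∧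
      (∀ ν : Fin N, ν ≠ o → q (zGen n L N m ν) = 1)) ∧
    (∀ q : OrbifoldFundGroup n L N m →*
        Monoid.Coprod (Multiplicative ℤ) (Multiplicative (ZMod (m o))),
      (q (yGen n L N m θ) = tGen (m o) ∧
       q (zGen n L N m o) = sGen (m o) ∧
       (∀ k : Fin (n - 1), q (xGen n L N m k) = 1) ∧
       (∀ l : Fin L, l ≠ θ → q (yGen n L N m l) = 1) ∧
       (∀ ν : Fin N, ν ≠ o → q (zGen n L N m ν) = 1)) →
      ((∀ (k : Fin (n - 1)) (ν : Fin N),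
          q ((xGen n L N m k * zGen n L N m ν) ^ m ν *
            ((xGen n L N m k)⁻¹ * (zGen n L N m ν)⁻¹) ^ m ν) = 1) ∧
        q ((yGen n L N m θ * zGen n L N m o) ^ m o *
          ((yGen n L N m θ)⁻¹ * (zGen n L N m o)⁻¹) ^ m o) ≠ 1)) :=
  stmt_6_general n L N m hm θ o
end

section
/- Let n ≥ 2, L ≥ 1, N ≥ 1, m₁, …, m_N ≥ 2, Γ = ℤ/m₁ ∗ ⋯ ∗ ℤ/m_N with distinguished generators z₁, …, z_N, and F the free group on x₁, …, x_{n−1}, y₁, …, y_L. Then for every 1 ≤ θ ≤ L and 1 ≤ o ≤ N, the element (y_θ·z_o)^{m_o}·(y_θ⁻¹·z_o⁻¹)^{m_o} of F ∗ Γ does not belong to the normal closure in F ∗ Γ of the set {(x_k·z_ν)^{m_ν}·(x_k⁻¹·z_ν⁻¹)^{m_ν} : 1 ≤ k ≤ n−1, 1 ≤ ν ≤ N}. -/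
theorem pow_mul_inv_mul_inv_pow_ne_one {G : Type*} [Group G] {a b : G} {M : ℕ}
    (h : (a * b) ^ (M + 1) = 1) (hab : ¬Commute a b) : (a * b) ^ M * (a⁻¹ * b⁻¹) ^ M ≠ 1 := by
  have hpow : (a * b) ^ M = (a * b)⁻¹ := eq_inv_of_mul_eq_one_left (by rwa [← pow_succ])
  have hconj : a⁻¹ * b⁻¹ = a⁻¹ * (a * b)⁻¹ * a⁻¹⁻¹ := by group
  rw [hconj, conj_pow, inv_pow, hpow, inv_inv, inv_inv]
  intro h1
  have hba : b * a = a * b := by simpa [mul_assoc, inv_mul_eq_iff_eq_mul] using h1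
  exact hab hba.symm

namespace Equiv.Perm

variable {α : Type*} [DecidableEq α] {f : Perm α} {x : α}

theorem IsCycle.swap_mul_pow_card_support_sub_one [Fintype α] (hf : IsCycle f)
    (hffx : f (f x) ≠ x) : (swap x (f x) * f) ^ (f.support.card - 1) = 1 := by
  have hfx : f x ≠ x := fun h => hffx (by rw [h, h])
  have hcard : (swap x (f x) * f).support.card = f.support.card - 1 := by
    rw [support_swap_mul_eq f x hffx, Finset.sdiff_singleton_eq_erase,
      Finset.card_erase_of_mem (mem_support.2 hfx)]
  rw [← hcard, ← (hf.swap_mul hfx hffx).orderOf, pow_orderOf_eq_one]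

theorem not_commute_swap_apply (hffx : f (f x) ≠ x) : ¬Commute (swap x (f x)) f := by
  intro h
  apply hffx
  simpa using (Equiv.congr_fun h x).symm

theorem exists_pow_eq_one_and_pow_mul_inv_mul_inv_pow_ne_one {M : ℕ} (hM : 2 ≤ M) :
    ∃ a b : Perm (Fin (M + 1)), b ^ M = 1 ∧ (a * b) ^ M * (a⁻¹ * b⁻¹) ^ M ≠ 1 := by
  obtain ⟨k, rfl⟩ : ∃ k, M = k + 2 := ⟨M - 2, by omega⟩
  set c := finRotate (k + 3)
  have hc : IsCycle c := isCycle_finRotate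
  have hcard : c.support.card = k + 3 := by simp [c, support_finRotate]
  have hcc : c (c 0) ≠ 0 := by
    simp [c, Fin.ext_iff, Fin.val_add, Nat.mod_eq_of_lt (show 2 < k + 3 by omega)]
  refine ⟨swap 0 (c 0), swap 0 (c 0) * c, ?_, ?_⟩
  · simpa [hcard] using hc.swap_mul_pow_card_support_sub_one hcc
  · apply pow_mul_inv_mul_inv_pow_ne_one
    · simpa [hc.orderOf, hcard] using pow_orderOf_eq_one c
    · intro h
      exact not_commute_swap_apply hcc (by simpa using (Commute.refl _).inv_right.mul_right h)

end Equiv.Perm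

def zmodPowHom {G : Type*} [Group G] {n : ℕ} (g : G) (hg : g ^ n = 1) :
    Multiplicative (ZMod n) →* G :=
  AddMonoidHom.toMultiplicativeLeft <| ZMod.lift n
    ⟨zmultiplesHom (Additive G) (Additive.ofMul g), by simp [← ofMul_pow, hg]⟩

theorem zmodPowHom_ofAdd_one {G : Type*} [Group G] {n : ℕ} (g : G) (hg : g ^ n = 1) :
    zmodPowHom g hg (Multiplicative.ofAdd 1) = g := by
  simp only [zmodPowHom, AddMonoidHom.toMultiplicativeLeft_apply_apply, toAdd_ofAdd]
  rw [← Int.cast_one, ZMod.lift_coe]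
  simp

theorem MonoidHom.map_pow_mul_inv_mul_inv_pow_eq_one {G H : Type*} [Group G] [Group H]
    (φ : G →* H) {x : G} (hx : φ x = 1) (z : G) (k : ℕ) :
    φ ((x * z) ^ k * (x⁻¹ * z⁻¹) ^ k) = 1 := by
  simp [hx, inv_pow]

namespace OrbifoldFundGroup

variable (n L N : ℕ) (m : Fin N → ℕ) (o : Fin N) {H : Type*} [Group H] (a b : H)
  (hb : b ^ m o = 1)

def homYZ : OrbifoldFundGroup n L N m →* H :=
  Monoid.Coprod.lift (FreeGroup.lift (Sum.elim 1 fun _ => a))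
    (Monoid.CoprodI.lift fun ν => zmodPowHom (if ν = o then b else 1) (by
      split_ifs with h
      · exact h ▸ hb
      · exact one_pow _))

theorem homYZ_xGen (k : Fin (n - 1)) : homYZ n L N m o a b hb (xGen n L N m k) = 1 := by
  simp [homYZ, xGen]

theorem homYZ_yGen (l : Fin L) : homYZ n L N m o a b hb (yGen n L N m l) = a := by
  simp [homYZ, yGen]

theorem homYZ_zGen_self : homYZ n L N m o a b hb (zGen n L N m o) = b := by
  simp [homYZ, zGen, zmodPowHom_ofAdd_one]

end OrbifoldFundGroup

theorem stmt_7_general (n L N : ℕ)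
    (m : Fin N → ℕ) (hm : ∀ ν, 2 ≤ m ν) (θ : Fin L) (o : Fin N) :
    (yGen n L N m θ * zGen n L N m o) ^ m o *
        ((yGen n L N m θ)⁻¹ * (zGen n L N m o)⁻¹) ^ m o ∉
      Subgroup.normalClosure
        {g : OrbifoldFundGroup n L N m | ∃ (k : Fin (n - 1)) (ν : Fin N),
          g = (xGen n L N m k * zGen n L N m ν) ^ m ν *
            ((xGen n L N m k)⁻¹ * (zGen n L N m ν)⁻¹) ^ m ν} := by
  obtain ⟨a, b, hb, hab⟩ :=
    Equiv.Perm.exists_pow_eq_one_and_pow_mul_inv_mul_inv_pow_ne_one (hm o)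
  set φ := OrbifoldFundGroup.homYZ n L N m o a b hb
  intro hmem
  have hker := Subgroup.normalClosure_le_normal (N := φ.ker) ?_ hmem
  · apply hab
    rw [MonoidHom.mem_ker, map_mul, map_pow, map_pow, map_mul, map_mul, map_inv φ, map_inv φ]
      at hker
    simpa [φ, OrbifoldFundGroup.homYZ_yGen, OrbifoldFundGroup.homYZ_zGen_self] using hker
  · rintro _ ⟨k, ν, rfl⟩
    exact φ.map_pow_mul_inv_mul_inv_pow_eq_one (OrbifoldFundGroup.homYZ_xGen n L N m o a b hb k)
      (zGen n L N m ν) (m ν)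

/-- For every `1 ≤ θ ≤ L` and `1 ≤ o ≤ N`, the element
`(y_θ·z_o)^{m_o}·(y_θ⁻¹·z_o⁻¹)^{m_o}` of `F ∗ Γ` does not belong to the normal
closure of the set `{(x_k·z_ν)^{m_ν}·(x_k⁻¹·z_ν⁻¹)^{m_ν}}`. -/
theorem stmt_7 (n L N : ℕ) (hn : 2 ≤ n) (hL : 1 ≤ L) (hN : 1 ≤ N)
    (m : Fin N → ℕ) (hm : ∀ ν, 2 ≤ m ν) (θ : Fin L) (o : Fin N) :
    (yGen n L N m θ * zGen n L N m o) ^ m o *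
        ((yGen n L N m θ)⁻¹ * (zGen n L N m o)⁻¹) ^ m o ∉
      Subgroup.normalClosure
        {g : OrbifoldFundGroup n L N m | ∃ (k : Fin (n - 1)) (ν : Fin N),
          g = (xGen n L N m k * zGen n L N m ν) ^ m ν *
            ((xGen n L N m k)⁻¹ * (zGen n L N m ν)⁻¹) ^ m ν} :=
  stmt_7_general n L N m hm θ o
end

section
/- Let X and Y be sets, R a set of elements of the free group F(X) and S a set of elements of the free group F(Y), and set N = ⟨X ∣ R⟩ and H = ⟨Y ∣ S⟩ (presented groups, i.e. F(X)/⟨⟨R⟩⟩ and F(Y)/⟨⟨S⟩⟩). Let φ : H → Aut(N) be a group homomorphism, and for each y ∈ Y and x ∈ X let w_{y,x} ∈ F(X) be a word whose image in N equals φ(ȳ)(x̄), where x̄ and ȳ denote the images of the generators in N and H. Then the group presented on the generating set X ⊔ Y with relators R ∪ S ∪ { y·x·y⁻¹·w_{y,x}⁻¹ : x ∈ X, y ∈ Y } (where R, S and w_{y,x} are regarded in the free group on X ⊔ Y via the canonical inclusions) is isomorphic to the semidirect product N ⋊_φ H, via an isomorphism sending each generator x to (x̄, 1) and each generator y to (1,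 ȳ). -/
/-- Presentation of a semidirect product: given presented groups `N = ⟨X ∣ R⟩` and
`H = ⟨Y ∣ S⟩`, a homomorphism `φ : H → Aut(N)`, and for each `y ∈ Y`, `x ∈ X` a word
`w y x ∈ F(X)` representing `φ(ȳ)(x̄)` in `N`, the group presented on `X ⊔ Y` with
relators `R ∪ S ∪ {y·x·y⁻¹·(w y x)⁻¹}` is isomorphic to `N ⋊[φ] H` via an isomorphism
sending `x` to `(x̄, 1)` and `y` to `(1, ȳ)`. -/
theorem stmt_8 {X Y : Type*} (R : Set (FreeGroup X)) (S : Set (FreeGroup Y))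
    (φ : PresentedGroup S →* MulAut (PresentedGroup R))
    (w : Y → X → FreeGroup X)
    (hw : ∀ (y : Y) (x : X),
      PresentedGroup.mk R (w y x) = φ (PresentedGroup.of y) (PresentedGroup.of x)) :
    ∃ e : PresentedGroup
        ((⇑(FreeGroup.map (Sum.inl : X → X ⊕ Y)) '' R) ∪
          (⇑(FreeGroup.map (Sum.inr : Y → X ⊕ Y)) '' S) ∪
          {r : FreeGroup (X ⊕ Y) | ∃ (x : X) (y : Y),
            r = FreeGroup.of (Sum.inr y) * FreeGroup.of (Sum.inl x) *
              (FreeGroup.of (Sum.inr y))⁻¹ *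
              (FreeGroup.map (Sum.inl : X → X ⊕ Y) (w y x))⁻¹})
        ≃* PresentedGroup R ⋊[φ] PresentedGroup S,
      (∀ x : X, e (PresentedGroup.of (Sum.inl x)) =
          SemidirectProduct.inl (PresentedGroup.of x)) ∧
      (∀ y : Y, e (PresentedGroup.of (Sum.inr y)) =
          SemidirectProduct.inr (PresentedGroup.of y)) := by
  classical
  set T : Set (FreeGroup (X ⊕ Y)) :=
      ((⇑(FreeGroup.map (Sum.inl : X → X ⊕ Y)) '' R) ∪
        (⇑(FreeGroup.map (Sum.inr : Y → X ⊕ Y)) '' S) ∪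
        {r : FreeGroup (X ⊕ Y) | ∃ (x : X) (y : Y),
          r = FreeGroup.of (Sum.inr y) * FreeGroup.of (Sum.inl x) *
            (FreeGroup.of (Sum.inr y))⁻¹ *
            (FreeGroup.map (Sum.inl : X → X ⊕ Y) (w y x))⁻¹}) with hT
  have mkT_rel : ∀ r ∈ T, PresentedGroup.mk T r = 1 := by
    intro r hr
    exact (QuotientGroup.eq_one_iff r).2 (Subgroup.subset_normalClosure hr)
  have mkR_rel : ∀ r ∈ R, PresentedGroup.mk R r = 1 := fun r hr =>
    (QuotientGroup.eq_one_iff r).2 (Subgroup.subset_normalClosure hr)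
  have mkS_rel : ∀ r ∈ S, PresentedGroup.mk S r = 1 := fun r hr =>
    (QuotientGroup.eq_one_iff r).2 (Subgroup.subset_normalClosure hr)
  set f : X ⊕ Y → PresentedGroup R ⋊[φ] PresentedGroup S :=
    Sum.elim (fun x => SemidirectProduct.inl (PresentedGroup.of x))
      (fun y => SemidirectProduct.inr (PresentedGroup.of y)) with hf
  have keyl : ∀ u : FreeGroup X,
      FreeGroup.lift f (FreeGroup.map (Sum.inl : X → X ⊕ Y) u)
        = SemidirectProduct.inl (PresentedGroup.mk R u) := by
    intro u
    have : (FreeGroup.lift f).comp (FreeGroup.map (Sum.inl : X → X ⊕ Y))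
        = (SemidirectProduct.inl (φ := φ)).comp (PresentedGroup.mk R) := by
      apply FreeGroup.ext_hom; intro x; simp [hf]; rfl
    exact DFunLike.congr_fun this u
  have keyr : ∀ u : FreeGroup Y,
      FreeGroup.lift f (FreeGroup.map (Sum.inr : Y → X ⊕ Y) u)
        = SemidirectProduct.inr (PresentedGroup.mk S u) := by
    intro u
    have : (FreeGroup.lift f).comp (FreeGroup.map (Sum.inr : Y → X ⊕ Y))
        = (SemidirectProduct.inr (φ := φ)).comp (PresentedGroup.mk S) := by
      apply FreeGroup.ext_hom; intro y; simp [hf]; rfl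
    exact DFunLike.congr_fun this u
  have hfrel : ∀ r ∈ T, FreeGroup.lift f r = 1 := by
    intro r hr
    rcases hr with (⟨r₀, hr₀, rfl⟩ | ⟨r₀, hr₀, rfl⟩) | ⟨x, y, rfl⟩
    · rw [keyl, mkR_rel r₀ hr₀, map_one]
    · rw [keyr, mkS_rel r₀ hr₀, map_one]
    · simp only [map_mul, map_inv, keyl, hw]
      simp only [FreeGroup.lift_apply_of, hf, Sum.elim_inl, Sum.elim_inr]
      rw [SemidirectProduct.inl_aut, map_inv]
      group
  set e' : PresentedGroup T →* PresentedGroup R ⋊[φ] PresentedGroup S :=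
    PresentedGroup.toGroup hfrel with he'
  have hι₁rel : ∀ r ∈ R, FreeGroup.lift
      (fun x => (PresentedGroup.of (Sum.inl x) : PresentedGroup T)) r = 1 := by
    intro r hr
    have h : FreeGroup.lift (fun x => (PresentedGroup.of (Sum.inl x) : PresentedGroup T))
        = (PresentedGroup.mk T).comp (FreeGroup.map (Sum.inl : X → X ⊕ Y)) := by
      apply FreeGroup.ext_hom; intro x; simp; rfl
    rw [h]
    exact mkT_rel _ (Or.inl (Or.inl ⟨r, hr, rfl⟩))
  have hι₂rel : ∀ r ∈ S, FreeGroup.lift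
      (fun y => (PresentedGroup.of (Sum.inr y) : PresentedGroup T)) r = 1 := by
    intro r hr
    have h : FreeGroup.lift (fun y => (PresentedGroup.of (Sum.inr y) : PresentedGroup T))
        = (PresentedGroup.mk T).comp (FreeGroup.map (Sum.inr : Y → X ⊕ Y)) := by
      apply FreeGroup.ext_hom; intro y; simp; rfl
    rw [h]
    exact mkT_rel _ (Or.inl (Or.inr ⟨r, hr, rfl⟩))
  set ι₁ : PresentedGroup R →* PresentedGroup T := PresentedGroup.toGroup hι₁rel with hι₁
  set ι₂ : PresentedGroup S →* PresentedGroup T := PresentedGroup.toGroup hι₂rel with hι₂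
  have keyT : ∀ u : FreeGroup X,
      ι₁ (PresentedGroup.mk R u)
        = PresentedGroup.mk T (FreeGroup.map (Sum.inl : X → X ⊕ Y) u) := by
    intro u
    have h : ι₁.comp (PresentedGroup.mk R)
        = (PresentedGroup.mk T).comp (FreeGroup.map (Sum.inl : X → X ⊕ Y)) := by
      apply FreeGroup.ext_hom; intro x; simp [hι₁]; rfl
    exact DFunLike.congr_fun h u
  -- compatibility condition for the lift out of the semidirect product
  have compat : ∀ g : PresentedGroup S,
      ι₁.comp (φ g).toMonoidHom = (MulAut.conj (ι₂ g)).toMonoidHom.comp ι₁ := by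
    let K : Subgroup (PresentedGroup S) :=
      { carrier := {g | ∀ n, ι₁ (φ g n) = ι₂ g * ι₁ n * (ι₂ g)⁻¹}
        one_mem' := by intro n; simp
        mul_mem' := by
          intro a b ha hb n
          simp only [map_mul, MulAut.mul_apply, MulEquiv.coe_toMonoidHom]
          rw [ha, hb]
          group
        inv_mem' := by
          intro a ha n
          have := ha ((φ a⁻¹) n)
          rw [← MulAut.mul_apply, ← map_mul, mul_inv_cancel, map_one,
            MulAut.one_apply] at this
          simp only [map_inv]
          rw [this]
          simp [mul_assoc] }
    have hgen : ∀ g : PresentedGroup S, g ∈ K := by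
      intro g
      refine PresentedGroup.generated_by S K ?_ g
      intro y n
      have hKy : ι₁.comp (φ (PresentedGroup.of y)).toMonoidHom
          = (MulAut.conj (ι₂ (PresentedGroup.of y))).toMonoidHom.comp ι₁ := by
        apply PresentedGroup.ext
        intro x
        have h1 : ι₂ (PresentedGroup.of y) = PresentedGroup.of (Sum.inr y) := by
          simp [hι₂]
        have h2 : ι₁ (PresentedGroup.of x) = PresentedGroup.of (Sum.inl x) := by
          simp [hι₁]
        simp only [MonoidHom.comp_apply, MulEquiv.coe_toMonoidHom, MulAut.conj_apply,
          h1, h2]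
        rw [← hw y x, keyT]
        have hrel := mkT_rel _ (Or.inr ⟨x, y, rfl⟩)
        simp only [map_mul, map_inv] at hrel
        have : PresentedGroup.mk T (FreeGroup.of (Sum.inr y))
              * PresentedGroup.mk T (FreeGroup.of (Sum.inl x))
              * (PresentedGroup.mk T (FreeGroup.of (Sum.inr y)))⁻¹
            = PresentedGroup.mk T (FreeGroup.map (Sum.inl : X → X ⊕ Y) (w y x)) := by
          rw [← mul_inv_eq_one]
          exact hrel
        exact this.symm
      exact DFunLike.congr_fun hKy n
    intro g
    exact MonoidHom.ext fun n => hgen g n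
  set F : PresentedGroup R ⋊[φ] PresentedGroup S →* PresentedGroup T :=
    SemidirectProduct.lift ι₁ ι₂ compat with hF
  have h1 : F.comp e' = MonoidHom.id _ := by
    apply PresentedGroup.ext
    rintro (x | y) <;>
      simp [hF, he', hf, hι₁, hι₂, PresentedGroup.toGroup.of]
  have h2 : e'.comp F = MonoidHom.id _ := by
    apply SemidirectProduct.hom_ext
    · apply PresentedGroup.ext
      intro x
      simp [hF, hι₁, he', hf, PresentedGroup.toGroup.of]
    · apply PresentedGroup.ext
      intro y
      simp [hF, hι₂, he', hf, PresentedGroup.toGroup.of]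
  refine ⟨MonoidHom.toMulEquiv e' F h1 h2, ?_, ?_⟩
  · intro x
    show e' (PresentedGroup.of (Sum.inl x)) = _
    simp [he', hf, PresentedGroup.toGroup.of]
  · intro y
    show e' (PresentedGroup.of (Sum.inr y)) = _
    simp [he', hf, PresentedGroup.toGroup.of]
end
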